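/- arXiv:2306.12791 — 3 statements merged into one kernel-verified Lean document; each statement's English description precedes it below -/
import Mathlib

section
/- Let F be a finite field of characteristic 2, let n ≥ 4, and let M be an n×n matrix over F with at most n + 1 nonzero entries (i.e., with fixed XOR K ≤ 1). Then M^k is not an NMDS matrix for every integer k with 0 ≤ k ≤ n. In particular, there does not exist any k-NMDS matrix of order n ≥ 4 with K = 1 and k ≤ n over a field of characteristic 2. -/
open Matrix

/-- The Hamming weight of a vector: the number of nonzero coordinates. -/
def wt {F : Type*} [Zero F] [DecidableEq F] {n : ℕ} (x : Fin n → F) : ℕ :=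
  (Finset.univ.filter fun i => x i ≠ 0).card

/-- The differential branch number of a square matrix `M`:
the minimum of `wt x + wt (M x)` over all nonzero vectors `x`. -/
noncomputable def branchD {F : Type*} [Field F] [DecidableEq F] {n : ℕ}
    (M : Matrix (Fin n) (Fin n) F) : ℕ :=
  sInf {k | ∃ x : Fin n → F, x ≠ 0 ∧ k = wt x + wt (M.mulVec x)}

/-- The linear branch number of a square matrix `M`:
the minimum of `wt x + wt (Mᵀ x)` over all nonzero vectors `x`. -/
noncomputable def branchL {F : Type*} [Field F] [DecidableEq F] {n : ℕ}
    (M : Matrix (Fin n) (Fin n) F) : ℕ :=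
  sInf {k | ∃ x : Fin n → F, x ≠ 0 ∧ k = wt x + wt (Mᵀ.mulVec x)}

/-- A square matrix of order `n` is near-MDS (NMDS) if both its differential
and linear branch numbers equal `n`. -/
def IsNMDS {F : Type*} [Field F] [DecidableEq F] {n : ℕ}
    (M : Matrix (Fin n) (Fin n) F) : Prop :=
  branchD M = n ∧ branchL M = n
/-- The number of nonzero entries of a matrix. -/
def nonzeroEntries {F : Type*} [Zero F] [DecidableEq F] {n : ℕ}
    (M : Matrix (Fin n) (Fin n) F) : ℕ :=
  (Finset.univ.filter fun p : Fin n × Fin n => M p.1 p.2 ≠ 0).card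

/-! If `M ^ k` is NMDS, every row and every column of `M ^ k` has at least `n - 1` nonzero entries.
Then no row or column of `M` vanishes, so in the support digraph of `M` all out-degrees are `1`
except possibly one vertex `v` of out-degree `2`, and all in-degrees are `1` except at most one
equal to `2`. The set of vertices reached from `i` by walks of length `t` grows only at the times it
contains `v`; reaching `n - 1` vertices within `k ≤ n` steps forces every walk from a vertex that is
neither `v` nor an in-neighbour of `v` to sit at `v` alone after two steps and again after three.
Hence `v` carries a loop and every vertex reaches `v` in exactly two steps, which the in-degree
bounds permit for at most three vertices. -/

open Finset

lemma wt_pi_single {F : Type*} [Zero F] [DecidableEq F] {n : ℕ} (i : Fin n) {a : F}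
    (ha : a ≠ 0) : wt (Pi.single i a) = 1 := by
  rw [wt, card_eq_one]
  exact ⟨i, by ext j; rcases eq_or_ne j i with rfl | h <;> simp [*]⟩

section NearMDS

variable {F : Type*} [Field F] [DecidableEq F] {n : ℕ}

lemma IsNMDS.transpose {A : Matrix (Fin n) (Fin n) F} (hA : IsNMDS A) : IsNMDS Aᵀ := by
  refine ⟨hA.2, ?_⟩
  simpa only [branchL, branchD, transpose_transpose] using hA.1

lemma IsNMDS.le_one_add_wt_row {A : Matrix (Fin n) (Fin n) F} (hA : IsNMDS A) (i : Fin n) :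
    n ≤ 1 + wt (A i) := by
  have h : branchL A ≤ wt (Pi.single i (1 : F)) + wt (Aᵀ *ᵥ Pi.single i 1) :=
    Nat.sInf_le ⟨_, Pi.single_ne_zero_iff.2 one_ne_zero, rfl⟩
  rwa [hA.2, wt_pi_single i one_ne_zero, mulVec_single_one, col_transpose] at h

end NearMDS

section SupportDigraph

variable {ι R : Type*} [Fintype ι] [Semiring R] [DecidableEq R]

def outNbrs (M : Matrix ι ι R) (i : ι) : Finset ι := {j | M i j ≠ 0}

@[simp]
lemma mem_outNbrs {M : Matrix ι ι R} {i j : ι} : j ∈ outNbrs M i ↔ M i j ≠ 0 := by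
  simp [outNbrs]

variable [DecidableEq ι]

/-- The vertices reachable from `i` by walks of length exactly `t` in the support digraph of `M`. -/
def reach (M : Matrix ι ι R) (t : ℕ) (i : ι) : Finset ι :=
  (fun S : Finset ι => S.biUnion (outNbrs M))^[t] {i}

variable (M : Matrix ι ι R)

lemma reach_zero (i : ι) : reach M 0 i = {i} := rfl

lemma reach_succ (t : ℕ) (i : ι) : reach M (t + 1) i = (reach M t i).biUnion (outNbrs M) :=
  Function.iterate_succ_apply' _ _ _

lemma mem_reach_succ {t : ℕ} {i j : ι} : j ∈ reach M (t + 1) i ↔ ∃ l ∈ reach M t i, M l j ≠ 0 := by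
  simp [reach_succ]

lemma mem_reach_one {i j : ι} : j ∈ reach M 1 i ↔ M i j ≠ 0 := by
  simp [mem_reach_succ, reach_zero]

lemma reach_succ_eq_empty {i : ι} (hi : outNbrs M i = ∅) (t : ℕ) : reach M (t + 1) i = ∅ := by
  rw [reach, Function.iterate_succ_apply, singleton_biUnion, hi]
  exact Function.iterate_fixed biUnion_empty t

lemma mem_reach_of_pow_apply_ne_zero {t : ℕ} {i j : ι} (h : (M ^ t) i j ≠ 0) :
    j ∈ reach M t i := by
  induction t generalizing j with
  | zero =>
    rw [pow_zero, one_apply] at h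
    simp_all [reach_zero]
  | succ t ih =>
    rw [pow_succ, mul_apply] at h
    obtain ⟨l, -, hl⟩ := exists_ne_zero_of_sum_ne_zero h
    exact (mem_reach_succ M).2 ⟨l, ih (left_ne_zero_of_mul hl), right_ne_zero_of_mul hl⟩

end SupportDigraph

lemma wt_row_pow_le_card_reach {R : Type*} [Semiring R] [DecidableEq R] {n : ℕ}
    (M : Matrix (Fin n) (Fin n) R) (t : ℕ) (i : Fin n) : wt ((M ^ t) i) ≤ #(reach M t i) :=
  card_le_card fun _ hj => mem_reach_of_pow_apply_ne_zero M (mem_filter.1 hj).2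

lemma sum_card_outNbrs {R : Type*} [Semiring R] [DecidableEq R] {n : ℕ}
    (M : Matrix (Fin n) (Fin n) R) : ∑ i, #(outNbrs M i) = nonzeroEntries M := by
  simp only [nonzeroEntries, outNbrs, card_filter, Fintype.sum_prod_type]

lemma nonzeroEntries_transpose {R : Type*} [Semiring R] [DecidableEq R] {n : ℕ}
    (M : Matrix (Fin n) (Fin n) R) : nonzeroEntries Mᵀ = nonzeroEntries M := by
  simp only [nonzeroEntries, card_filter, Fintype.sum_prod_type]
  exact Finset.sum_comm

section Counting

variable {ι : Type*} [DecidableEq ι]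

lemma sum_le_card_add_one_of_one_le [Fintype ι] {f : ι → ℕ} (hf : ∀ i, 1 ≤ f i)
    (hsum : ∑ i, f i ≤ Fintype.card ι + 1) (s : Finset ι) : ∑ i ∈ s, f i ≤ #s + 1 := by
  have hcompl : #sᶜ ≤ ∑ i ∈ sᶜ, f i := by
    simpa using sum_le_sum fun i (_ : i ∈ sᶜ) => hf i
  have := sum_add_sum_compl s f
  have := card_compl s
  have := card_le_univ s
  omega

lemma exists_forall_notMem_sum_le [Nonempty ι] {f : ι → ℕ}
    (hf : ∀ s : Finset ι, ∑ i ∈ s, f i ≤ #s + 1) :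
    ∃ v, ∀ s : Finset ι, v ∉ s → ∑ i ∈ s, f i ≤ #s := by
  by_cases h : ∃ v, 2 ≤ f v
  · obtain ⟨v, hv⟩ := h
    refine ⟨v, fun s hs => ?_⟩
    have := hf (insert v s)
    rw [sum_insert hs, card_insert_of_notMem hs] at this
    omega
  · push Not at h
    refine ⟨Classical.arbitrary ι, fun s _ => ?_⟩
    simpa using sum_le_sum fun i (_ : i ∈ s) => Nat.le_of_lt_succ (h i)

lemma card_iterate_le_card_add_card_filter {f : Finset ι → Finset ι} {v : ι}
    (hf : ∀ S, #(f S) ≤ #S + 1) (hfv : ∀ S, v ∉ S → #(f S) ≤ #S) (S : Finset ι) (t : ℕ) :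
    #(f^[t] S) ≤ #S + #{s ∈ range t | v ∈ f^[s] S} := by
  induction t with
  | zero => simp
  | succ t ih =>
    rw [Function.iterate_succ_apply', range_add_one, filter_insert]
    by_cases hv : v ∈ f^[t] S
    · rw [if_pos hv, card_insert_of_notMem (by simp)]
      have := hf (f^[t] S)
      omega
    · rw [if_neg hv]
      exact (hfv _ hv).trans ih

lemma card_filter_range_le_sub_three {P : ℕ → Prop} [DecidablePred P] {k n s : ℕ} (hk : k ≤ n)
    (hs : 2 ≤ s) (hsn : s < n) (h0 : ¬P 0) (h1 : ¬P 1) (hPs : ¬P s) :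
    #{t ∈ range k | P t} ≤ n - 3 := by
  have hsub : {t ∈ range k | P t} ⊆ range n \ {0, 1, s} := by
    intro t ht
    rw [mem_filter, mem_range] at ht
    simp only [mem_sdiff, mem_range, mem_insert, mem_singleton]
    refine ⟨by omega, ?_⟩
    rintro (rfl | rfl | rfl) <;> simp_all
  have hcard : #({0, 1, s} : Finset ℕ) = 3 := by
    rw [card_insert_of_notMem (by simp; omega), card_pair (by omega)]
  calc #{t ∈ range k | P t} ≤ #(range n \ {0, 1, s}) := card_le_card hsub
    _ = n - 3 := by
      rw [card_sdiff_of_subset (by intro t; simp; omega), card_range, hcard]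

end Counting

section Core

variable {ι R : Type*} [DecidableEq ι] [Fintype ι] [Semiring R] [DecidableEq R]
  {M : Matrix ι ι R} {v : ι} {k : ℕ}

lemma card_reach_le_one_add_card_filter (hout : ∀ S : Finset ι, ∑ x ∈ S, #(outNbrs M x) ≤ #S + 1)
    (hv : ∀ S : Finset ι, v ∉ S → ∑ x ∈ S, #(outNbrs M x) ≤ #S) (t : ℕ) (i : ι) :
    #(reach M t i) ≤ 1 + #{s ∈ range t | v ∈ reach M s i} := by
  have := card_iterate_le_card_add_card_filter
    (fun S => card_biUnion_le.trans (hout S)) (fun S hS => card_biUnion_le.trans (hv S hS)) {i} t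
  rwa [card_singleton] at this

/-- Reachability sets grow only at the times they contain `v`, so a reach of size `n - 1` at time
`k ≤ n` leaves no room to miss `v` at time `2` or `3`, when starting outside `v` and its
in-neighbours. -/
lemma reach_two_eq_singleton (h4 : 4 ≤ Fintype.card ι) (hk : k ≤ Fintype.card ι)
    (hreach : ∀ i, Fintype.card ι ≤ 1 + #(reach M k i))
    (hout : ∀ S : Finset ι, ∑ x ∈ S, #(outNbrs M x) ≤ #S + 1)
    (hv : ∀ S : Finset ι, v ∉ S → ∑ x ∈ S, #(outNbrs M x) ≤ #S)
    {i : ι} (hiv : i ≠ v) (hMiv : M i v = 0) : reach M 2 i = {v} ∧ v ∈ reach M 3 i := by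
  have h0 : v ∉ reach M 0 i := by simpa [reach_zero] using hiv.symm
  have h1 : v ∉ reach M 1 i := by simpa [mem_reach_one] using hMiv
  have hhit : ∀ s, 2 ≤ s → s < Fintype.card ι → v ∈ reach M s i := by
    intro s hs hsn
    by_contra hvs
    have := card_filter_range_le_sub_three (P := fun s => v ∈ reach M s i) hk hs hsn h0 h1 hvs
    have := card_reach_le_one_add_card_filter hout hv k i
    have := hreach i
    omega
  have hcard : #(reach M 2 i) ≤ 1 := by
    have hfilter : {s ∈ range 2 | v ∈ reach M s i} = ∅ :=
      filter_false_of_mem fun s hs => by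
        rw [mem_range] at hs
        interval_cases s <;> assumption
    simpa [hfilter] using card_reach_le_one_add_card_filter hout hv 2 i
  exact ⟨eq_singleton_iff_unique_mem.2
    ⟨hhit 2 le_rfl (by omega), fun x hx => card_le_one.1 hcard x hx v (hhit 2 le_rfl (by omega))⟩,
    hhit 3 (by omega) (by omega)⟩

theorem card_le_three_of_le_card_reach (hk : k ≤ Fintype.card ι)
    (hreach : ∀ i, Fintype.card ι ≤ 1 + #(reach M k i))
    (hout : ∀ S : Finset ι, ∑ x ∈ S, #(outNbrs M x) ≤ #S + 1)
    (hin : ∀ S : Finset ι, ∑ x ∈ S, #(outNbrs Mᵀ x) ≤ #S + 1) : Fintype.card ι ≤ 3 := by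
  by_contra! h4
  have : Nonempty ι := Fintype.card_pos_iff.1 (by omega)
  obtain ⟨v, hv⟩ := exists_forall_notMem_sum_le hout
  have hinv : #(outNbrs Mᵀ v) ≤ 2 := by simpa using hin {v}
  have hloop : M v v ≠ 0 := by
    obtain ⟨i, -, hi⟩ := exists_mem_notMem_of_card_lt_card
      (s := insert v (outNbrs Mᵀ v)) (t := univ)
      (by rw [card_univ]; exact (card_insert_le _ _).trans_lt (by omega))
    simp only [mem_insert, mem_outNbrs, transpose_apply, not_or, not_not] at hi
    obtain ⟨h2, h3⟩ := reach_two_eq_singleton h4 hk hreach hout hv hi.1 hi.2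
    obtain ⟨l, hl, hlv⟩ := (mem_reach_succ M).1 h3
    rw [h2, mem_singleton] at hl
    rwa [hl] at hlv
  have hcover : (univ : Finset ι) ⊆ (outNbrs Mᵀ v).biUnion (outNbrs Mᵀ) := by
    intro i _
    simp only [mem_biUnion, mem_outNbrs, transpose_apply]
    by_cases hiv : M i v = 0
    · have h2 := (reach_two_eq_singleton h4 hk hreach hout hv (by rintro rfl; exact hloop hiv)
        hiv).1
      obtain ⟨x, hx, hxv⟩ := (mem_reach_succ M).1 (h2 ▸ mem_singleton_self v)
      exact ⟨x, hxv, (mem_reach_one M).1 hx⟩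
    · exact ⟨v, hloop, hiv⟩
  have := calc Fintype.card ι = #(univ : Finset ι) := card_univ.symm
    _ ≤ #((outNbrs Mᵀ v).biUnion (outNbrs Mᵀ)) := card_le_card hcover
    _ ≤ ∑ x ∈ outNbrs Mᵀ v, #(outNbrs Mᵀ x) := card_biUnion_le
    _ ≤ #(outNbrs Mᵀ v) + 1 := hin _
  omega

end Core

section Powers

variable {F : Type*} [Field F] [DecidableEq F] {n : ℕ} {M : Matrix (Fin n) (Fin n) F} {k : ℕ}

lemma IsNMDS.le_one_add_card_reach (hM : IsNMDS (M ^ k)) (i : Fin n) :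
    n ≤ 1 + #(reach M k i) :=
  (hM.le_one_add_wt_row i).trans (Nat.add_le_add_left (wt_row_pow_le_card_reach M k i) 1)

lemma sum_card_outNbrs_le (h : nonzeroEntries M ≤ n + 1)
    (hreach : ∀ i, (reach M (k + 1) i).Nonempty) (S : Finset (Fin n)) :
    ∑ x ∈ S, #(outNbrs M x) ≤ #S + 1 := by
  refine sum_le_card_add_one_of_one_le (fun i => one_le_card.2 ?_) ?_ S
  · rw [nonempty_iff_ne_empty]
    exact fun hi => (hreach i).ne_empty (reach_succ_eq_empty M hi k)
  · simpa [sum_card_outNbrs] using h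

end Powers

theorem stmt_11_general {F : Type*} [Field F] [DecidableEq F]
    {n : ℕ} (hn : 4 ≤ n) (M : Matrix (Fin n) (Fin n) F) (h : nonzeroEntries M ≤ n + 1)
    (k : ℕ) (hk : k ≤ n) :
    ¬ IsNMDS (M ^ k) := by
  intro hM
  have hrow := hM.le_one_add_card_reach
  have hcol := (transpose_pow M k ▸ hM.transpose).le_one_add_card_reach
  obtain ⟨k, rfl⟩ : ∃ t, k = t + 1 := Nat.exists_eq_succ_of_ne_zero <| by
    rintro rfl
    have := hrow ⟨0, by omega⟩
    rw [reach_zero, card_singleton] at this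
    omega
  have hnonempty {A : Matrix (Fin n) (Fin n) F} (hA : ∀ i, n ≤ 1 + #(reach A (k + 1) i))
      (i : Fin n) : (reach A (k + 1) i).Nonempty :=
    card_pos.1 (by have := hA i; omega)
  have h3 : Fintype.card (Fin n) ≤ 3 :=
    card_le_three_of_le_card_reach (k := k + 1)
      (by rwa [Fintype.card_fin]) (by rwa [Fintype.card_fin])
      (sum_card_outNbrs_le h (hnonempty hrow))
      (sum_card_outNbrs_le (nonzeroEntries_transpose M ▸ h) (hnonempty hcol))
  rw [Fintype.card_fin] at h3
  omega

/-- For n ≥ 4, an n×n matrix over a finite field of characteristic 2 with at most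
n + 1 nonzero entries is not k-NMDS for any k ≤ n. -/
theorem stmt_11 {F : Type*} [Field F] [Fintype F] [DecidableEq F] [CharP F 2]
    {n : ℕ} (hn : 4 ≤ n) (M : Matrix (Fin n) (Fin n) F) (h : nonzeroEntries M ≤ n + 1)
    (k : ℕ) (hk : k ≤ n) :
    ¬ IsNMDS (M ^ k) :=
  stmt_11_general hn M h k hk
end

section
/- Let a_1,…,a_n be nonzero elements of F_{2^r} with product a = a_1·a_2·…·a_n, let D1 = diag(a_1,…,a_n) and D1' = diag(a,1,1,…,1), let D2 be any diagonal matrix over F_{2^r}, let ρ be a derangement of {1,…,n}, and let k ∈ {n−1, n}. Then the DLS matrix M = DLS(ρ; D1, D2) is k-NMDS if and only if M' = DLS(ρ; D1', D2) is k-NMDS. -/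
open Matrix

/-- The permutation matrix associated to a permutation `σ`
(a 0-1 matrix obtained by permuting the rows of the identity matrix). -/
def permMatrix (F : Type*) [Zero F] [One F] {n : ℕ} (σ : Equiv.Perm (Fin n)) :
    Matrix (Fin n) (Fin n) F :=
  Matrix.of fun i j => if i = σ j then 1 else 0
/-- The diagonal-like sparse (DLS) matrix `DLS(σ; D1, D2) = P·D1 + D2`, where `P` is
the permutation matrix of `σ`. -/
def DLS {F : Type*} [Field F] {n : ℕ} (σ : Equiv.Perm (Fin n)) (D1 D2 : Fin n → F) :
    Matrix (Fin n) (Fin n) F :=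
  permMatrix F σ * Matrix.diagonal D1 + Matrix.diagonal D2

section Aux

variable {F : Type*} [Field F] [DecidableEq F] {n : ℕ}

lemma wt_mul_left (d x : Fin n → F) (hd : ∀ i, d i ≠ 0) :
    wt (fun i => d i * x i) = wt x := by
  unfold wt
  congr 1
  apply Finset.filter_congr
  intro i _
  simp [hd i]

lemma diagonal_mulVec' (d x : Fin n → F) :
    (diagonal d).mulVec x = fun i => d i * x i :=
  funext fun i => mulVec_diagonal d x i

lemma mulVec_conj (d : Fin n → F) (M : Matrix (Fin n) (Fin n) F) (x : Fin n → F) :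
    (diagonal (fun i => (d i)⁻¹) * M * diagonal d).mulVec x
      = fun i => (d i)⁻¹ * (M.mulVec (fun j => d j * x j)) i := by
  rw [← mulVec_mulVec, ← mulVec_mulVec, diagonal_mulVec', diagonal_mulVec']

lemma branchD_conj (d : Fin n → F) (hd : ∀ i, d i ≠ 0)
    (M : Matrix (Fin n) (Fin n) F) :
    branchD (diagonal (fun i => (d i)⁻¹) * M * diagonal d) = branchD M := by
  have hd' : ∀ i, (d i)⁻¹ ≠ 0 := fun i => inv_ne_zero (hd i)
  unfold branchD
  congr 1
  ext m
  simp only [Set.mem_setOf_eq]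
  constructor
  · rintro ⟨x, hx, rfl⟩
    refine ⟨fun j => d j * x j, ?_, ?_⟩
    · intro h
      apply hx
      funext j
      have := congrFun h j
      simpa [hd j] using this
    · rw [mulVec_conj, wt_mul_left _ _ hd', wt_mul_left _ _ hd]
  · rintro ⟨y, hy, rfl⟩
    refine ⟨fun j => (d j)⁻¹ * y j, ?_, ?_⟩
    · intro h
      apply hy
      funext j
      have := congrFun h j
      simpa [hd' j] using this
    · rw [mulVec_conj]
      have h1 : (fun j => d j * ((d j)⁻¹ * y j)) = y := by
        funext j
        rw [← mul_assoc, mul_inv_cancel₀ (hd j), one_mul]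
      rw [h1, wt_mul_left _ _ hd', wt_mul_left _ _ hd']

lemma branchL_conj (d : Fin n → F) (hd : ∀ i, d i ≠ 0)
    (M : Matrix (Fin n) (Fin n) F) :
    branchL (diagonal (fun i => (d i)⁻¹) * M * diagonal d) = branchL M := by
  have key : (diagonal (fun i => (d i)⁻¹) * M * diagonal d)ᵀ
      = diagonal (fun i => ((d i)⁻¹)⁻¹) * Mᵀ * diagonal (fun i => (d i)⁻¹) := by
    rw [transpose_mul, transpose_mul, diagonal_transpose, diagonal_transpose]
    simp only [inv_inv]
    rw [Matrix.mul_assoc]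
  show branchD _ = branchD Mᵀ
  rw [key, branchD_conj (fun i => (d i)⁻¹) (fun i => inv_ne_zero (hd i)) Mᵀ]

lemma isNMDS_conj (d : Fin n → F) (hd : ∀ i, d i ≠ 0)
    (M : Matrix (Fin n) (Fin n) F) :
    IsNMDS (diagonal (fun i => (d i)⁻¹) * M * diagonal d) ↔ IsNMDS M := by
  unfold IsNMDS
  rw [branchD_conj d hd, branchL_conj d hd]

lemma conj_pow_eq (d : Fin n → F) (hd : ∀ i, d i ≠ 0)
    (M : Matrix (Fin n) (Fin n) F) (k : ℕ) :
    (diagonal (fun i => (d i)⁻¹) * M * diagonal d) ^ k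
      = diagonal (fun i => (d i)⁻¹) * M ^ k * diagonal d := by
  have h1 : diagonal d * diagonal (fun i => (d i)⁻¹) = (1 : Matrix (Fin n) (Fin n) F) := by
    rw [diagonal_mul_diagonal,
      show (fun i => d i * (d i)⁻¹) = fun _ : Fin n => (1 : F) from
        funext fun i => mul_inv_cancel₀ (hd i), diagonal_one]
  have h2 : diagonal (fun i => (d i)⁻¹) * diagonal d = (1 : Matrix (Fin n) (Fin n) F) := by
    rw [diagonal_mul_diagonal,
      show (fun i => (d i)⁻¹ * d i) = fun _ : Fin n => (1 : F) from
        funext fun i => inv_mul_cancel₀ (hd i), diagonal_one]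
  exact Units.conj_pow' ⟨diagonal d, diagonal (fun i => (d i)⁻¹), h1, h2⟩ M k

lemma DLS_apply (σ : Equiv.Perm (Fin n)) (b D2 : Fin n → F) (i j : Fin n) :
    DLS σ b D2 i j = (if i = σ j then b j else 0) + (if i = j then D2 j else 0) := by
  simp only [DLS, Matrix.add_apply, Matrix.mul_diagonal, permMatrix, Matrix.of_apply,
    Matrix.diagonal_apply, ite_mul, one_mul, zero_mul]
  congr 1
  split
  · rename_i h; rw [h]
  · rfl

lemma DLS_conj (σ : Equiv.Perm (Fin n)) (hσ : ∀ i, σ i ≠ i) (b b' D2 : Fin n → F)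
    (d : Fin n → F) (hd : ∀ i, d i ≠ 0)
    (hrel : ∀ j, (d (σ j))⁻¹ * b j * d j = b' j) :
    DLS σ b' D2 = diagonal (fun i => (d i)⁻¹) * DLS σ b D2 * diagonal d := by
  ext i j
  rw [mul_diagonal, diagonal_mul, DLS_apply, DLS_apply]
  by_cases h1 : i = σ j
  · have h2 : i ≠ j := fun h => hσ j ((h ▸ h1 : (j : Fin n) = σ j)).symm
    subst h1
    simp only [if_pos rfl, if_neg h2, add_zero]
    exact (hrel j).symm
  · by_cases h2 : i = j
    · subst h2
      simp only [if_neg h1, zero_add, if_pos rfl]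
      have h0 := hd i
      field_simp
    · simp [h1, h2]

lemma key_cycle (hn : 2 ≤ n) (σ : Equiv.Perm (Fin n))
    (hc : ∀ x y : Fin n, σ.SameCycle x y)
    (b b' : Fin n → F) (hb : ∀ i, b i ≠ 0) (hb' : ∀ i, b' i ≠ 0)
    (hprod : ∏ j, b' j = ∏ j, b j) :
    ∃ d : Fin n → F, (∀ i, d i ≠ 0) ∧ ∀ j, (d (σ j))⁻¹ * b j * d j = b' j := by
  haveI : NeZero n := ⟨by omega⟩
  set c : Fin n → F := fun j => b' j * (b j)⁻¹ with hc_def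
  have hcne : ∀ j, c j ≠ 0 := fun j => mul_ne_zero (hb' j) (inv_ne_zero (hb j))
  have hcy : σ.IsCycleOn (Finset.univ : Finset (Fin n)) := by
    constructor
    · rw [Finset.coe_univ]
      exact σ.bijective.bijOn_univ
    · intro x _ y _
      exact hc x y
  have hcard : (Finset.univ : Finset (Fin n)).card = n := by simp
  set z : Fin n := 0 with hz
  set P : ℕ → F := fun m => ∏ s ∈ Finset.range m, c ((σ ^ s) z) with hP
  have hinj : ∀ p q : ℕ, (σ ^ p) z = (σ ^ q) z ↔ p ≡ q [MOD n] := by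
    intro p q
    have := hcy.pow_apply_eq_pow_apply (Finset.mem_univ z) (m := p) (n := q)
    rwa [hcard] at this
  have hcprod : ∏ j, c j = 1 := by
    rw [hc_def]
    rw [Finset.prod_mul_distrib, Finset.prod_inv_distrib, hprod,
      mul_inv_cancel₀ (Finset.prod_ne_zero_iff.2 fun j _ => hb j)]
  have hblock : ∀ m : ℕ, (∏ s ∈ Finset.range n, c ((σ ^ (m + s)) z)) = ∏ j, c j := by
    intro m
    apply Finset.prod_bij (fun s _ => (σ ^ (m + s)) z)
    · intro s _
      exact Finset.mem_univ _
    · intro s hs t ht h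
      rw [hinj] at h
      have hs' := Finset.mem_range.1 hs
      have ht' := Finset.mem_range.1 ht
      have := Nat.ModEq.add_left_cancel' m h
      unfold Nat.ModEq at this
      rwa [Nat.mod_eq_of_lt hs', Nat.mod_eq_of_lt ht'] at this
    · intro j _
      obtain ⟨s, hs, hsb⟩ := hcy.exists_pow_eq (Finset.mem_univ z)
        (Finset.mem_univ ((σ ^ m)⁻¹ j))
      refine ⟨s, Finset.mem_range.2 (by rwa [hcard] at hs), ?_⟩
      rw [pow_add, Equiv.Perm.mul_apply, hsb]
      simp
    · intro s _
      rfl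
  have hPn : P n = 1 := by
    have hb0 := hblock 0
    simp only [zero_add] at hb0
    show ∏ s ∈ Finset.range n, c ((σ ^ s) z) = 1
    rw [hb0, hcprod]
  have hPadd : ∀ m, P (m + n) = P m := by
    intro m
    show ∏ s ∈ Finset.range (m + n), c ((σ ^ s) z) = ∏ s ∈ Finset.range m, c ((σ ^ s) z)
    rw [Finset.prod_range_add, hblock m, hcprod, mul_one]
  have hPmod : ∀ p, P p = P (p % n) := by
    intro p
    induction p using Nat.strong_induction_on with
    | _ p ih =>
      by_cases h : p < n
      · rw [Nat.mod_eq_of_lt h]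
      · push_neg at h
        have hp : p = (p - n) + n := by omega
        rw [hp, hPadd, ih (p - n) (by omega), Nat.add_mod_right]
  have hPne : ∀ m, P m ≠ 0 := by
    intro m
    apply Finset.prod_ne_zero_iff.2
    intro s _
    exact hcne _
  have hPeq : ∀ p q, (σ ^ p) z = (σ ^ q) z → P p = P q := by
    intro p q h
    rw [hPmod p, hPmod q]
    exact congrArg P ((hinj p q).1 h)
  have hex : ∀ i : Fin n, ∃ m : ℕ, (σ ^ m) z = i := by
    intro i
    obtain ⟨m, _, hm⟩ := hcy.exists_pow_eq (Finset.mem_univ z) (Finset.mem_univ i)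
    exact ⟨m, hm⟩
  choose t ht using hex
  refine ⟨fun i => (P (t i))⁻¹, fun i => inv_ne_zero (hPne _), ?_⟩
  intro j
  have h1 : (σ ^ (t j + 1)) z = σ j := by
    rw [pow_succ', Equiv.Perm.mul_apply, ht j]
  have h2 : P (t (σ j)) = P (t j + 1) := hPeq _ _ (by rw [ht (σ j), h1])
  have h3 : P (t j + 1) = P (t j) * c j := by
    show ∏ s ∈ Finset.range (t j + 1), c ((σ ^ s) z) = P (t j) * c j
    rw [Finset.prod_range_succ, ht j]
  show ((P (t (σ j)))⁻¹)⁻¹ * b j * (P (t j))⁻¹ = b' j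
  rw [inv_inv, h2, h3, hc_def]
  have hP0 := hPne (t j)
  have hb0 := hb j
  field_simp

lemma not_nmds_of_not_cycle (σ : Equiv.Perm (Fin n)) (hσ : ∀ i, σ i ≠ i)
    (b D2 : Fin n → F) (k : ℕ) (x y : Fin n) (hxy : ¬ σ.SameCycle x y) :
    ¬ IsNMDS (DLS σ b D2 ^ k) := by
  classical
  set S : Finset (Fin n) := Finset.univ.filter (fun j => σ.SameCycle x j) with hS
  set T : Finset (Fin n) := Finset.univ.filter (fun j => σ.SameCycle y j) with hT
  have hdisj : Disjoint S T := by
    rw [Finset.disjoint_left]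
    intro j hjS hjT
    rw [hS, Finset.mem_filter] at hjS
    rw [hT, Finset.mem_filter] at hjT
    exact hxy (hjS.2.trans hjT.2.symm)
  have hxS : x ∈ S := by
    rw [hS, Finset.mem_filter]
    exact ⟨Finset.mem_univ _, Equiv.Perm.SameCycle.refl σ x⟩
  have hmemS : ∀ j ∈ S, σ j ∈ S := by
    intro j hj
    rw [hS, Finset.mem_filter] at hj ⊢
    exact ⟨Finset.mem_univ _, hj.2.trans ⟨1, by simp⟩⟩
  have hcard2 : ∀ (u : Fin n) (U : Finset (Fin n)),
      U = Finset.univ.filter (fun j => σ.SameCycle u j) → 2 ≤ U.card := by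
    intro u U hU
    have h1 : u ∈ U := by
      rw [hU, Finset.mem_filter]
      exact ⟨Finset.mem_univ _, Equiv.Perm.SameCycle.refl σ u⟩
    have h2 : σ u ∈ U := by
      rw [hU, Finset.mem_filter]
      exact ⟨Finset.mem_univ _, ⟨1, by simp⟩⟩
    calc 2 = ({u, σ u} : Finset (Fin n)).card := (Finset.card_pair (hσ u).symm).symm
      _ ≤ U.card := Finset.card_le_card (by
          intro w hw
          rw [Finset.mem_insert, Finset.mem_singleton] at hw
          rcases hw with rfl | rfl
          · exact h1
          · exact h2)
  have hST : S.card + T.card ≤ n := by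
    have h1 : (S ∪ T).card = S.card + T.card := Finset.card_union_of_disjoint hdisj
    have h2 : (S ∪ T).card ≤ n := by
      have := Finset.card_le_univ (S ∪ T)
      simpa using this
    omega
  have hScard : S.card ≤ n - 2 := by
    have := hcard2 y T hT
    omega
  have h4 : 4 ≤ n := by
    have := hcard2 y T hT
    have := hcard2 x S hS
    omega
  have hsupp : ∀ (m : ℕ) (v : Fin n → F), (∀ i, i ∉ S → v i = 0) →
      ∀ i, i ∉ S → ((DLS σ b D2 ^ m).mulVec v) i = 0 := by
    intro m
    induction m with
    | zero =>
      intro v hv i hi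
      rw [pow_zero, Matrix.one_mulVec]
      exact hv i hi
    | succ m ih =>
      intro v hv i hi
      rw [pow_succ, ← mulVec_mulVec]
      apply ih
      · intro i' hi'
        show dotProduct _ _ = 0
        apply Finset.sum_eq_zero
        intro j _
        by_cases hj : j ∈ S
        · have ha1 : i' ≠ σ j := fun h => hi' (by rw [h]; exact hmemS j hj)
          have ha2 : i' ≠ j := fun h => hi' (by rw [h]; exact hj)
          show DLS σ b D2 i' j * v j = 0
          rw [DLS_apply]
          simp [ha1, ha2]
        · rw [hv j hj, mul_zero]
      · exact hi
  intro hN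
  set v : Fin n → F := Pi.single x (1 : F) with hv
  have hv0 : v ≠ 0 := by
    intro h
    have := congrFun h x
    rw [hv] at this
    simp at this
  have hvS : ∀ i, i ∉ S → v i = 0 := by
    intro i hi
    rw [hv]
    exact Pi.single_eq_of_ne (fun h => hi (by rw [h]; exact hxS)) 1
  have hwtv : wt v = 1 := by
    unfold wt
    have : (Finset.univ.filter fun i => v i ≠ 0) = {x} := by
      ext i
      simp only [Finset.mem_filter, Finset.mem_univ, true_and, Finset.mem_singleton, hv,
        Pi.single_apply]
      constructor
      · intro h
        by_contra hne
        simp [hne] at h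
      · intro h
        subst h
        simp
    rw [this, Finset.card_singleton]
  have hsub : (Finset.univ.filter fun i => ((DLS σ b D2 ^ k).mulVec v) i ≠ 0) ⊆ S := by
    intro i hi
    rw [Finset.mem_filter] at hi
    by_contra hiS
    exact hi.2 (hsupp k v hvS i hiS)
  have hwtM : wt ((DLS σ b D2 ^ k).mulVec v) ≤ n - 2 :=
    le_trans (Finset.card_le_card hsub) hScard
  have hle : branchD (DLS σ b D2 ^ k) ≤ 1 + (n - 2) := by
    calc branchD (DLS σ b D2 ^ k) ≤ wt v + wt ((DLS σ b D2 ^ k).mulVec v) :=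
          Nat.sInf_le ⟨v, hv0, rfl⟩
      _ ≤ 1 + (n - 2) := by rw [hwtv]; omega
  rw [hN.1] at hle
  omega

end Aux

/-- With a = a₁⋯aₙ and D1' = diag(a, 1, …, 1), for k ∈ {n−1, n} the DLS matrix
DLS(ρ; D1, D2) is k-NMDS iff DLS(ρ; D1', D2) is k-NMDS. -/
theorem stmt_13 {F : Type*} [Field F] [Fintype F] [DecidableEq F] [CharP F 2]
    {n : ℕ} (a : Fin n → F) (ha : ∀ i, a i ≠ 0)
    (D2 : Fin n → F) (σ : Equiv.Perm (Fin n)) (hσ : ∀ i, σ i ≠ i)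
    (k : ℕ) (hk : k = n - 1 ∨ k = n) :
    IsNMDS (DLS σ a D2 ^ k) ↔
      IsNMDS (DLS σ (fun i => if (i : ℕ) = 0 then ∏ j, a j else 1) D2 ^ k) := by
  classical
  by_cases hc : ∀ x y : Fin n, σ.SameCycle x y
  · rcases Nat.lt_or_ge n 2 with h | h
    · interval_cases n
      · have he : (fun i : Fin 0 => if (i : ℕ) = 0 then ∏ j, a j else 1) = a :=
          funext fun i => i.elim0
        rw [he]
      · exact absurd (Subsingleton.elim (σ 0) 0) (hσ 0)
    · haveI : NeZero n := ⟨by omega⟩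
      set a' : Fin n → F := fun i => if (i : ℕ) = 0 then ∏ j, a j else 1 with ha'_def
      have ha' : ∀ i, a' i ≠ 0 := by
        intro i
        rw [ha'_def]
        dsimp only
        split
        · exact Finset.prod_ne_zero_iff.2 fun j _ => ha j
        · exact one_ne_zero
      have hprod : ∏ j, a' j = ∏ j, a j := by
        rw [ha'_def]
        rw [Finset.prod_eq_single (0 : Fin n)]
        · simp
        · intro i _ hi
          have : (i : ℕ) ≠ 0 := fun h => hi (by
            apply Fin.ext
            simpa using h)
          simp [this]
        · simp
      obtain ⟨d, hd, hrel⟩ := key_cycle h σ hc a a' ha ha' hprod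
      have hM : DLS σ a' D2 = diagonal (fun i => (d i)⁻¹) * DLS σ a D2 * diagonal d :=
        DLS_conj σ hσ a a' D2 d hd hrel
      rw [hM, conj_pow_eq d hd, isNMDS_conj d hd]
  · push_neg at hc
    obtain ⟨x, y, hxy⟩ := hc
    exact iff_of_false (not_nmds_of_not_cycle σ hσ a D2 k x y hxy)
      (not_nmds_of_not_cycle σ hσ _ D2 k x y hxy)
end

section
/- Let n ≥ 5 and let M be an n×n matrix over a finite field F_{2^r} all of whose entries lie in {0, 1} (the subfield elements 0 and 1 of F_{2^r}). Then M is not an NMDS matrix; moreover, for every positive integer k, M^k is not an NMDS matrix (so M is not k-NMDS for any k). -/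
open Matrix

/-!
A `{0,1}`-matrix over a field of characteristic 2 is the image of a matrix `R` over `𝔽₂`, and so
are its powers; vectors over `𝔽₂` map to vectors of the same weight, so it suffices to find a
light vector for `R`. Average over the seven nonzero `𝔽₂`-vectors supported on three fixed
coordinates: they have total weight 12, and each row of `R`, restricted to those coordinates, is
a linear form on `𝔽₂³` and so is nonzero on at most four of them. One of the seven thus has
`7 · (wt x + wt (R x)) ≤ 4n + 12`, which is `< 7n` once `n ≥ 5`.
-/

open Finset Function

theorem wt_eq_sum {F : Type*} [Zero F] [DecidableEq F] {n : ℕ} (x : Fin n → F) :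
    wt x = ∑ i, if x i ≠ 0 then 1 else 0 :=
  card_filter _ _

theorem wt_comp_of_injective {K L : Type*} [Zero K] [Zero L] [DecidableEq K] [DecidableEq L]
    {n : ℕ} {f : K → L} (hf : Injective f) (hf0 : f 0 = 0) (x : Fin n → K) :
    wt (f ∘ x) = wt x := by
  simp only [wt, Function.comp_apply, ← hf0, hf.ne_iff]

theorem wt_extend {F : Type*} [Zero F] [DecidableEq F] {m n : ℕ} {e : Fin m → Fin n}
    (he : Injective e) (c : Fin m → F) : wt (extend e c 0) = wt c := by
  have : (univ.filter fun j => extend e c 0 j ≠ 0) =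
      (univ.filter fun i => c i ≠ 0).map ⟨e, he⟩ := by
    ext j
    by_cases hj : ∃ i, e i = j
    · obtain ⟨i, rfl⟩ := hj
      simp [he.extend_apply]
    · simp_all [extend_apply']
  rw [wt, this, card_map, wt]

theorem mulVec_extend_apply {α ι m n : Type*} [Fintype ι] [Fintype n]
    [NonUnitalNonAssocSemiring α] {e : ι → n} (he : Injective e) (R : Matrix m n α) (c : ι → α)
    (t : m) : (R *ᵥ extend e c 0) t = (fun i => R t (e i)) ⬝ᵥ c := by
  classical
  rw [mulVec, dotProduct, dotProduct, ← sum_subset (subset_univ (univ.map ⟨e, he⟩)), sum_map]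
  · simp [he.extend_apply]
  · intro j _ hj
    simp_all [extend_apply']

theorem card_dotProduct_ne_zero_le_four (r : Fin 3 → ZMod 2) :
    (univ.filter fun c : Fin 3 → ZMod 2 => r ⬝ᵥ c ≠ 0).card ≤ 4 := by
  revert r
  decide

theorem sum_wt_fin_three : ∑ c : Fin 3 → ZMod 2, wt c = 12 := by
  decide

theorem sum_wt_mulVec_extend_le {n : ℕ} (R : Matrix (Fin n) (Fin n) (ZMod 2))
    {e : Fin 3 → Fin n} (he : Injective e) :
    ∑ c : Fin 3 → ZMod 2, wt (R *ᵥ extend e c 0) ≤ 4 * n := by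
  simp_rw [wt_eq_sum, mulVec_extend_apply he]
  rw [sum_comm]
  calc ∑ t, ∑ c : Fin 3 → ZMod 2, (if (fun i => R t (e i)) ⬝ᵥ c ≠ 0 then 1 else 0)
      = ∑ t, (univ.filter fun c : Fin 3 → ZMod 2 => (fun i => R t (e i)) ⬝ᵥ c ≠ 0).card := by
        simp_rw [card_filter]
    _ ≤ ∑ _t : Fin n, 4 := sum_le_sum fun t _ => card_dotProduct_ne_zero_le_four _
    _ = 4 * n := by simp [mul_comm]

theorem exists_seven_mul_wt_add_wt_mulVec_le {n : ℕ} (hn : 3 ≤ n)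
    (R : Matrix (Fin n) (Fin n) (ZMod 2)) :
    ∃ x ≠ 0, 7 * (wt x + wt (R *ᵥ x)) ≤ 4 * n + 12 := by
  set e : Fin 3 → Fin n := Fin.castLE hn
  have he : Injective e := Fin.castLE_injective hn
  set f : (Fin 3 → ZMod 2) → ℕ := fun c => wt (extend e c 0) + wt (R *ᵥ extend e c 0)
  have hsum : ∑ c ∈ univ.erase 0, f c ≤ 4 * n + 12 := by
    have h0 : extend e (0 : Fin 3 → ZMod 2) 0 = 0 := extend_const e 0
    rw [sum_erase _ (by simp [f, h0, wt]), sum_add_distrib]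
    simp only [wt_extend he, sum_wt_fin_three]
    have := sum_wt_mulVec_extend_le R he
    omega
  have hcard : (univ.erase (0 : Fin 3 → ZMod 2)).card = 7 := by decide
  obtain ⟨c, hc, hle⟩ := exists_le_of_sum_le (s := univ.erase 0) (f := fun c => 7 * f c)
    (g := fun _ => 4 * n + 12) (by simp [← card_pos, hcard])
    (by rw [← mul_sum, sum_const, hcard, smul_eq_mul]; omega)
  refine ⟨extend e c 0, fun h => (mem_erase.1 hc).1 ?_, hle⟩
  ext i
  simpa [he.extend_apply] using congrFun h (e i)

theorem branchD_le {F : Type*} [Field F] [DecidableEq F] {n : ℕ}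
    (M : Matrix (Fin n) (Fin n) F) {x : Fin n → F} (hx : x ≠ 0) :
    branchD M ≤ wt x + wt (M *ᵥ x) :=
  Nat.sInf_le ⟨x, hx, rfl⟩

theorem branchD_map_le {K L : Type*} [Field K] [Field L] [DecidableEq K] [DecidableEq L] {n : ℕ}
    (R : Matrix (Fin n) (Fin n) K) (f : K →+* L) {x : Fin n → K} (hx : x ≠ 0) :
    branchD (R.map f) ≤ wt x + wt (R *ᵥ x) := by
  have hx' : f ∘ x ≠ 0 := fun h => hx (funext fun i => f.injective (by simpa using congrFun h i))
  calc branchD (R.map f) ≤ wt (f ∘ x) + wt (R.map f *ᵥ (f ∘ x)) := branchD_le _ hx'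
    _ = wt x + wt (R *ᵥ x) := by
      rw [show R.map f *ᵥ (f ∘ x) = f ∘ (R *ᵥ x) from
          funext fun i => (f.map_mulVec R x i).symm,
        wt_comp_of_injective f.injective (map_zero f),
        wt_comp_of_injective f.injective (map_zero f)]

theorem seven_mul_branchD_map_le {L : Type*} [Field L] [DecidableEq L] {n : ℕ} (hn : 3 ≤ n)
    (R : Matrix (Fin n) (Fin n) (ZMod 2)) (f : ZMod 2 →+* L) :
    7 * branchD (R.map f) ≤ 4 * n + 12 := by
  obtain ⟨x, hx, hle⟩ := exists_seven_mul_wt_add_wt_mulVec_le hn R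
  have := branchD_map_le R f hx
  omega

theorem exists_map_castHom_eq {F : Type*} [Field F] [CharP F 2] {m n : Type*}
    {M : Matrix m n F} (h01 : ∀ i j, M i j = 0 ∨ M i j = 1) :
    ∃ R : Matrix m n (ZMod 2), R.map (ZMod.castHom dvd_rfl F) = M := by
  classical
  refine ⟨of fun i j => if M i j = 0 then 0 else 1, ?_⟩
  ext i j
  rcases h01 i j with h | h <;> simp [h]

theorem stmt_16_general {F : Type*} [Field F] [DecidableEq F] [CharP F 2]
    {n : ℕ} (hn : 5 ≤ n) (M : Matrix (Fin n) (Fin n) F)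
    (h01 : ∀ i j, M i j = 0 ∨ M i j = 1) :
    ¬ IsNMDS M ∧ ∀ k : ℕ, 0 < k → ¬ IsNMDS (M ^ k) := by
  have not_isNMDS : ∀ R : Matrix (Fin n) (Fin n) (ZMod 2),
      ¬ IsNMDS (R.map (ZMod.castHom dvd_rfl F)) := by
    rintro R ⟨hD, -⟩
    have := seven_mul_branchD_map_le (by omega) R (ZMod.castHom dvd_rfl F)
    omega
  obtain ⟨R, rfl⟩ := exists_map_castHom_eq h01
  exact ⟨not_isNMDS R, fun k _ => by
    rw [← Matrix.map_pow]
    exact not_isNMDS (R ^ k)⟩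

/-- For n ≥ 5, a matrix whose entries all lie in {0, 1} is not NMDS, and no
positive power of it is NMDS. -/
theorem stmt_16 {F : Type*} [Field F] [Fintype F] [DecidableEq F] [CharP F 2]
    {n : ℕ} (hn : 5 ≤ n) (M : Matrix (Fin n) (Fin n) F)
    (h01 : ∀ i j, M i j = 0 ∨ M i j = 1) :
    ¬ IsNMDS M ∧ ∀ k : ℕ, 0 < k → ¬ IsNMDS (M ^ k) :=
  stmt_16_general hn M h01
end
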